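/- Suppose γ₁ ≥ 1 (so that also γ₂ = γ₁·exp(1/ℓ_y) ≥ 1). Let x_T, y : [0,∞) → ℝ² be differentiable trajectories and w_T : [0,∞) → ℝ² a continuous function such that for all t ≥ 0: x_T(t) ≠ y(t), e_y(t) = K₁·x_T(t) − y(t) ≠ 0, ẋ_T(t) = f_y(x_T(t), y(t)) + w_T(t), and ẏ(t) = u_y(t) with the feedback controller u_y = γ·(e_y/‖e_y‖)·(K₁ + ‖x_T‖)·‖w_T‖ + γ·(e_y/‖e_y‖)·(‖x_T‖² + ‖x_T‖·‖y‖ + K₁·‖x_T−y‖)/‖x_T−y‖², where γ = γ₁ if ‖x_T−y‖ > ℓ_y and γ = γ₂ if ‖x_T−y‖ ≤ ℓ_y. Then the Lyapunov function V(t) = (1/2)·‖x_T(t)‖² + ‖e_y(t)‖ is nonincreasing in t; in particular, for any constant c > 0, if V(0) ≤ c then V(t) ≤ c for all t ≥ 0, i.e., the sublevel set {V ≤ c} is forward invariant under the feedback controller. -/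

import Mathlib

open scoped RealInnerProductSpace

noncomputable section

/-- The plane ℝ². -/
abbrev E2 : Type := EuclideanSpace ℝ (Fin 2)

/-- Attraction function `φ_a(x) = -m_a x`. -/
def phiA (ma : ℝ) (v : E2) : E2 := (-ma) • v

/-- Bounded repulsion function `φ_b` (with `M_b = m_b / ℓ_b`). -/
def phiB (mb lb : ℝ) (v : E2) : E2 :=
  if lb < ‖v‖ then (mb / ‖v‖ ^ 2) • v else ((mb / lb) / ‖v‖) • v

/-- The function `g` with `g(0) = 0` and `g(d) = exp(-1/d)` for `d ≠ 0`. -/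
def gfun (d : ℝ) : ℝ := if d = 0 then 0 else Real.exp (-(1 / d))

/- Shepherd-to-sheep force `f_y` (with `γ₂ = γ₁ exp(1/ℓ_y)`), `f_y(y, y) = 0`. -/
open Classical in
def fy (γ1 ly : ℝ) (x y : E2) : E2 :=
  if x = y then 0
  else if ly < ‖x - y‖ then (γ1 / ‖x - y‖ ^ 2) • (x - y)
  else (γ1 * Real.exp (1 / ly) * gfun ‖x - y‖ / ‖x - y‖ ^ 2) • (x - y)

/- The switching gain `γ(x_T, y)`: `γ₁` if `‖x_T - y‖ > ℓ_y`, else `γ₂ = γ₁ exp(1/ℓ_y)`. -/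
def gainγ (γ1 ly : ℝ) (xT y : E2) : ℝ :=
  if ly < ‖xT - y‖ then γ1 else γ1 * Real.exp (1 / ly)

/- The feedback controller
`u_y = γ (e_y/‖e_y‖)(K₁ + ‖x_T‖)‖w_T‖
      + γ (e_y/‖e_y‖)(‖x_T‖² + ‖x_T‖‖y‖ + K₁‖x_T - y‖)/‖x_T - y‖²`,
where `e_y = K₁ x_T - y`. -/
def uy (γ1 ly K1 : ℝ) (xT y wT : E2) : E2 :=
  (gainγ γ1 ly xT y * ((K1 + ‖xT‖) * ‖wT‖) / ‖K1 • xT - y‖) • (K1 • xT - y) +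
    (gainγ γ1 ly xT y *
        ((‖xT‖ ^ 2 + ‖xT‖ * ‖y‖ + K1 * ‖xT - y‖) / ‖xT - y‖ ^ 2) / ‖K1 • xT - y‖) •
      (K1 • xT - y)

/-! Along the closed loop, `V̇ = ⟪x_T, ẋ_T⟫ + ⟪e_y, K₁ ẋ_T - u_y⟫ / ‖e_y‖`. By Cauchy–Schwarz and
`‖f_y‖ ≤ γ / ‖x_T - y‖`, the two force terms contribute at most `(‖x_T‖ + K₁)(γ / r + ‖w_T‖)`, with
`r = ‖x_T - y‖`, while the controller subtracts `γ ((K₁ + ‖x_T‖)‖w_T‖ + (‖x_T‖² + ‖x_T‖‖y‖ + K₁ r) / r²)`.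
What remains is `γ ‖x_T‖ (r - ‖x_T‖ - ‖y‖) / r² + (1 - γ)(‖x_T‖ + K₁)‖w_T‖`, which is `≤ 0` by the
triangle inequality and `γ ≥ 1`. -/

open Set

section InnerProductSpace

variable {F : Type*} [NormedAddCommGroup F] [InnerProductSpace ℝ F]

theorem HasDerivWithinAt.norm {f : ℝ → F} {f' : F} {s : Set ℝ} {t : ℝ}
    (hf : HasDerivWithinAt f f' s t) (h0 : f t ≠ 0) :
    HasDerivWithinAt (fun τ => ‖f τ‖) (⟪f t, f'⟫ / ‖f t‖) s t := by
  have hpos : 0 < ‖f t‖ := norm_pos_iff.mpr h0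
  have h := hf.norm_sq.sqrt (by positivity)
  simp only [Real.sqrt_sq (norm_nonneg _)] at h
  convert h using 1
  field_simp

theorem hasDerivWithinAt_lyapunov {x y : ℝ → F} {x' y' : F} {K : ℝ} {s : Set ℝ} {t : ℝ}
    (hx : HasDerivWithinAt x x' s t) (hy : HasDerivWithinAt y y' s t) (he : K • x t - y t ≠ 0) :
    HasDerivWithinAt (fun τ => (1 / 2) * ‖x τ‖ ^ 2 + ‖K • x τ - y τ‖)
      (⟪x t, x'⟫ + ⟪K • x t - y t, K • x' - y'⟫ / ‖K • x t - y t‖) s t := by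
  have h := (hx.norm_sq.const_mul (1 / 2)).add (((hx.const_smul K).sub hy).norm he)
  exact h.congr_deriv (by simp only [Pi.sub_apply, Pi.smul_apply]; ring)

theorem real_inner_le_norm_mul_of_norm_le {u v : F} {B : ℝ} (h : ‖v‖ ≤ B) :
    ⟪u, v⟫ ≤ ‖u‖ * B :=
  (real_inner_le_norm u v).trans (mul_le_mul_of_nonneg_left h (norm_nonneg u))

theorem real_inner_div_norm_smul_self (v : F) (c : ℝ) :
    ⟪v, (c / ‖v‖) • v⟫ = c * ‖v‖ := by
  rw [real_inner_smul_right, real_inner_self_eq_norm_sq]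
  rcases eq_or_ne ‖v‖ 0 with hv | hv
  · simp [hv]
  · field_simp

theorem norm_div_norm_sq_smul_le {v : F} {c B : ℝ} (hc : 0 ≤ c) (hcB : c ≤ B) :
    ‖(c / ‖v‖ ^ 2) • v‖ ≤ B / ‖v‖ := by
  rw [norm_smul, Real.norm_of_nonneg (by positivity)]
  rcases eq_or_ne ‖v‖ 0 with hv | hv
  · simp [hv]
  · rw [sq, ← div_div, div_mul_cancel₀ _ hv]
    exact div_le_div_of_nonneg_right hcB (norm_nonneg v)

end InnerProductSpace

theorem antitoneOn_Ici_of_hasDerivWithinAt_nonpos {f f' : ℝ → ℝ} {a : ℝ}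
    (hf : ∀ t, a ≤ t → HasDerivWithinAt f (f' t) (Ici a) t) (hf' : ∀ t, a < t → f' t ≤ 0) :
    AntitoneOn f (Ici a) := by
  refine antitoneOn_of_hasDerivWithinAt_nonpos (f' := f') (convex_Ici a)
    (fun t ht => (hf t ht).continuousWithinAt) (fun t ht => ?_) (fun t ht => ?_)
  · rw [interior_Ici] at ht ⊢
    exact (hf t ht.le).mono Ioi_subset_Ici_self
  · rw [interior_Ici] at ht
    exact hf' t ht

theorem lyapunov_rate_nonpos {γ a b k r w : ℝ} (hγ : 1 ≤ γ) (ha : 0 ≤ a) (hk : 0 ≤ k)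
    (hw : 0 ≤ w) (hr : 0 ≤ r) (hrab : r ≤ a + b) :
    (a + k) * (γ / r + w) - γ * ((k + a) * w + (a ^ 2 + a * b + k * r) / r ^ 2) ≤ 0 := by
  have hcontrol : 0 ≤ (γ - 1) * ((a + k) * w) := mul_nonneg (by linarith) (by positivity)
  rcases hr.eq_or_lt with rfl | hr
  · -- with `x / 0 = 0` the force terms vanish and only the controller's `w`-term remains
    simp only [div_zero, sq, mul_zero, zero_add, add_zero]
    linarith
  · have hsplit : (a + k) * (γ / r + w) - γ * ((k + a) * w + (a ^ 2 + a * b + k * r) / r ^ 2)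
        = γ * a * (r - (a + b)) / r ^ 2 - (γ - 1) * ((a + k) * w) := by
      field_simp
      ring
    have hforce : γ * a * (r - (a + b)) / r ^ 2 ≤ 0 :=
      div_nonpos_of_nonpos_of_nonneg
        (mul_nonpos_of_nonneg_of_nonpos (by positivity) (by linarith)) (by positivity)
    linarith

theorem gfun_nonneg (d : ℝ) : 0 ≤ gfun d := by
  unfold gfun
  split_ifs
  exacts [le_rfl, (Real.exp_pos _).le]

theorem gfun_le_one {d : ℝ} (hd : 0 ≤ d) : gfun d ≤ 1 := by
  unfold gfun
  split_ifs
  exacts [zero_le_one, Real.exp_le_one_iff.mpr (neg_nonpos.mpr (by positivity))]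

theorem one_le_gainγ {γ1 ly : ℝ} (hγ1 : 1 ≤ γ1) (hly : 0 ≤ ly) (x y : E2) :
    1 ≤ gainγ γ1 ly x y := by
  unfold gainγ
  split_ifs
  · exact hγ1
  · exact hγ1.trans (le_mul_of_one_le_right (by linarith) (Real.one_le_exp (by positivity)))

theorem norm_fy_le {γ1 : ℝ} (hγ1 : 0 ≤ γ1) (ly : ℝ) (x y : E2) :
    ‖fy γ1 ly x y‖ ≤ gainγ γ1 ly x y / ‖x - y‖ := by
  by_cases hxy : x = y
  · simp [fy, hxy]
  rw [fy, gainγ, if_neg hxy]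
  split_ifs
  · exact norm_div_norm_sq_smul_le hγ1 le_rfl
  · have hγ2 : 0 ≤ γ1 * Real.exp (1 / ly) := by positivity
    exact norm_div_norm_sq_smul_le (mul_nonneg hγ2 (gfun_nonneg _))
      (mul_le_of_le_one_right hγ2 (gfun_le_one (norm_nonneg _)))

theorem inner_uy (γ1 ly K1 : ℝ) (x y w : E2) :
    ⟪K1 • x - y, uy γ1 ly K1 x y w⟫ = gainγ γ1 ly x y *
      ((K1 + ‖x‖) * ‖w‖ + (‖x‖ ^ 2 + ‖x‖ * ‖y‖ + K1 * ‖x - y‖) / ‖x - y‖ ^ 2) * ‖K1 • x - y‖ := by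
  rw [uy, inner_add_right, real_inner_div_norm_smul_self, real_inner_div_norm_smul_self]
  ring

theorem lyapunov_rate_uy_nonpos {γ1 ly K1 : ℝ} (hγ1 : 1 ≤ γ1) (hly : 0 ≤ ly) (hK1 : 0 ≤ K1)
    {x y w : E2} (he : K1 • x - y ≠ 0) :
    ⟪x, fy γ1 ly x y + w⟫ +
      ⟪K1 • x - y, K1 • (fy γ1 ly x y + w) - uy γ1 ly K1 x y w⟫ / ‖K1 • x - y‖ ≤ 0 := by
  set γ := gainγ γ1 ly x y
  set B := γ / ‖x - y‖ + ‖w‖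
  have hv : ‖fy γ1 ly x y + w‖ ≤ B :=
    (norm_add_le _ _).trans (add_le_add_left (norm_fy_le (by linarith : (0:ℝ) ≤ γ1) ly x y) ‖w‖)
  have hKv : ‖K1 • (fy γ1 ly x y + w)‖ ≤ K1 * B := by
    rw [norm_smul, Real.norm_of_nonneg hK1]
    exact mul_le_mul_of_nonneg_left hv hK1
  have he' : 0 < ‖K1 • x - y‖ := norm_pos_iff.mpr he
  have hforce : ⟪K1 • x - y, K1 • (fy γ1 ly x y + w)⟫ / ‖K1 • x - y‖ ≤ K1 * B := by
    rw [div_le_iff₀ he', mul_comm]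
    exact real_inner_le_norm_mul_of_norm_le hKv
  rw [inner_sub_right, sub_div, inner_uy, mul_div_cancel_right₀ _ he'.ne']
  calc _ ≤ ‖x‖ * B + K1 * B - γ * ((K1 + ‖x‖) * ‖w‖ +
          (‖x‖ ^ 2 + ‖x‖ * ‖y‖ + K1 * ‖x - y‖) / ‖x - y‖ ^ 2) := by
        linarith [real_inner_le_norm_mul_of_norm_le (u := x) hv]
    _ = (‖x‖ + K1) * B - γ * ((K1 + ‖x‖) * ‖w‖ +
          (‖x‖ ^ 2 + ‖x‖ * ‖y‖ + K1 * ‖x - y‖) / ‖x - y‖ ^ 2) := by ring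
    _ ≤ 0 := lyapunov_rate_nonpos (one_le_gainγ hγ1 hly x y) (norm_nonneg _) hK1
        (norm_nonneg _) (norm_nonneg _) (norm_sub_le x y)

theorem statement10_general (γ1 ly K1 : ℝ) (hγ1 : 1 ≤ γ1) (hly : 0 < ly) (hK1 : 0 < K1)
    (xT y : ℝ → E2) (wT : ℝ → E2)
    (he : ∀ t : ℝ, 0 ≤ t → K1 • xT t - y t ≠ 0)
    (hxT : ∀ t : ℝ, 0 ≤ t →
      HasDerivWithinAt xT (fy γ1 ly (xT t) (y t) + wT t) (Set.Ici 0) t)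
    (hy : ∀ t : ℝ, 0 ≤ t →
      HasDerivWithinAt y (uy γ1 ly K1 (xT t) (y t) (wT t)) (Set.Ici 0) t) :
    AntitoneOn (fun t => (1 / 2) * ‖xT t‖ ^ 2 + ‖K1 • xT t - y t‖) (Set.Ici 0) ∧
    ∀ c : ℝ, 0 < c →
      (1 / 2) * ‖xT 0‖ ^ 2 + ‖K1 • xT 0 - y 0‖ ≤ c →
      ∀ t : ℝ, 0 ≤ t → (1 / 2) * ‖xT t‖ ^ 2 + ‖K1 • xT t - y t‖ ≤ c := by
  have hanti := antitoneOn_Ici_of_hasDerivWithinAt_nonpos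
    (fun t ht => hasDerivWithinAt_lyapunov (hxT t ht) (hy t ht) (he t ht))
    (fun t ht => lyapunov_rate_uy_nonpos hγ1 hly.le hK1.le (he t ht.le))
  exact ⟨hanti, fun c _ hV₀ t ht => (hanti self_mem_Ici ht ht).trans hV₀⟩

/-- along closed-loop trajectories with the feedback controller
`u_y`, the Lyapunov function `V = (1/2)‖x_T‖² + ‖e_y‖` (with `e_y = K₁ x_T - y`)
is nonincreasing on `[0, ∞)`; in particular every sublevel set `{V ≤ c}` is
forward invariant. -/
theorem statement10 (γ1 ly K1 : ℝ) (hγ1 : 1 ≤ γ1) (hly : 0 < ly) (hK1 : 0 < K1)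
    (xT y : ℝ → E2) (wT : ℝ → E2) (hwT : ContinuousOn wT (Set.Ici 0))
    (hne : ∀ t : ℝ, 0 ≤ t → xT t ≠ y t)
    (he : ∀ t : ℝ, 0 ≤ t → K1 • xT t - y t ≠ 0)
    (hxT : ∀ t : ℝ, 0 ≤ t →
      HasDerivWithinAt xT (fy γ1 ly (xT t) (y t) + wT t) (Set.Ici 0) t)
    (hy : ∀ t : ℝ, 0 ≤ t →
      HasDerivWithinAt y (uy γ1 ly K1 (xT t) (y t) (wT t)) (Set.Ici 0) t) :
    AntitoneOn (fun t => (1 / 2) * ‖xT t‖ ^ 2 + ‖K1 • xT t - y t‖) (Set.Ici 0) ∧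
    ∀ c : ℝ, 0 < c →
      (1 / 2) * ‖xT 0‖ ^ 2 + ‖K1 • xT 0 - y 0‖ ≤ c →
      ∀ t : ℝ, 0 ≤ t → (1 / 2) * ‖xT t‖ ^ 2 + ‖K1 • xT t - y t‖ ≤ c :=
  statement10_general γ1 ly K1 hγ1 hly hK1 xT y wT he hxT hy

end
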